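/- Any two demicaps in (ZMod 3)^4 are equivalent under an invertible affine transformation. -/

import Mathlib

abbrev V4 := Fin 4 → ZMod 3

def IsCap (C : Set V4) : Prop :=
  ∀ a ∈ C, ∀ b ∈ C, ∀ c ∈ C, a ≠ b → a ≠ c → b ≠ c → a + b + c ≠ 0

/-- A demicap with anchor `a`. -/
def IsDemicap (a : V4) (D : Set V4) : Prop :=
  D.ncard = 10 ∧ IsCap D ∧
  ∃ d d' : Fin 5 → V4,
    (∀ i, a + d i + d' i = 0) ∧
    D = Set.range d ∪ Set.range d' ∧
    ¬ ∃ s : Finset (Fin 5), s.card = 4 ∧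
      ∃ W : Submodule (ZMod 3) V4, Module.finrank (ZMod 3) W = 3 ∧
        ∀ i ∈ s, d i - a ∈ W

/-!
The directions `fᵢ = dᵢ - a` of the five lines through the anchor are such that any four of them
are linearly independent: they form a frame of the projective space `ℙ(V4)`. Any two frames are
related by a linear automorphism up to nonzero scalars on each vector (normalise a basis so that the
fifth vector is the sum of the other four). Over `ZMod 3` the nonzero scalars are `±1`, and the line
`{a + f, a - f}` is unchanged when `f` is replaced by `-f`, so composing with the translation from
one anchor to the other gives the affine map.
-/

open Module

section GeneralPosition

variable {K V W : Type*} [Field K] [AddCommGroup V] [Module K V] [FiniteDimensional K V]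
  [AddCommGroup W] [Module K W] [FiniteDimensional K W]

theorem Submodule.exists_le_finrank_add_one_eq {p : Submodule K V} (hp : p ≠ ⊤) :
    ∃ H : Submodule K V, p ≤ H ∧ finrank K H + 1 = finrank K V := by
  obtain ⟨φ, hφ, hle⟩ := p.exists_le_ker_of_lt_top hp.lt_top
  exact ⟨LinearMap.ker φ, hle, Module.Dual.finrank_ker_add_one_of_ne_zero hφ⟩

theorem linearIndependent_of_forall_hyperplane_exists_notMem {ι : Type*} [Fintype ι]
    {g : ι → V} (hcard : Fintype.card ι = finrank K V)
    (hg : ∀ H : Submodule K V, finrank K H + 1 = finrank K V → ∃ i, g i ∉ H) :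
    LinearIndependent K g := by
  refine linearIndependent_of_top_le_span_of_card_eq_finrank (top_le_iff.2 ?_) hcard
  by_contra hspan
  obtain ⟨H, hle, hH⟩ := Submodule.exists_le_finrank_add_one_eq hspan
  obtain ⟨i, hi⟩ := hg H hH
  exact hi (hle (Submodule.subset_span ⟨i, rfl⟩))

variable {n : ℕ}

theorem exists_basis_of_linearIndependent_succAbove (hV : finrank K V = n)
    {f : Fin (n + 1) → V} (hf : ∀ k, LinearIndependent K (f ∘ Fin.succAbove k)) :
    ∃ (b : Basis (Fin n) K V) (c : Fin n → K), (∀ j, c j ≠ 0) ∧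
      (∀ j, f j.castSucc = c j • b j) ∧ f (Fin.last n) = ∑ j, b j := by
  let B := basisOfLinearIndependentOfCardEqFinrank' (f ∘ Fin.castSucc)
    (by simpa only [Fin.succAbove_last] using hf (Fin.last n)) (by simp [hV])
  have hB : ∀ i, B i = f i.castSucc := by simp [B]
  have hc : ∀ j, B.repr (f (Fin.last n)) j ≠ 0 := by
    -- otherwise the `n` vectors other than `f j.castSucc` span `V` inside the kernel of `B.coord j`
    intro j hj
    have hker : ∀ m, m ≠ j.castSucc → B.coord j (f m) = 0 := by
      refine Fin.lastCases (fun _ => hj) fun i hi => ?_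
      have hij : i ≠ j := ne_of_apply_ne Fin.castSucc hi
      rw [← hB, Basis.coord_apply, B.repr_self, Finsupp.single_eq_of_ne hij.symm]
    have hzero : B.coord j = 0 :=
      LinearMap.ext_on_range ((hf j.castSucc).span_eq_top_of_card_eq_finrank' (by simp [hV]))
        fun k => hker _ (Fin.succAbove_ne _ k)
    simpa using congr($hzero (B j))
  refine ⟨B.isUnitSMul fun j => (hc j).isUnit, fun j => (B.repr (f (Fin.last n)) j)⁻¹,
    fun j => inv_ne_zero (hc j), fun j => ?_, ?_⟩
  · rw [Basis.isUnitSMul_apply, smul_smul, inv_mul_cancel₀ (hc j), one_smul, hB]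
  · simp only [Basis.isUnitSMul_apply]
    exact (B.sum_repr _).symm

theorem exists_linearEquiv_apply_eq_smul_of_linearIndependent_succAbove
    (hV : finrank K V = n) (hW : finrank K W = n) {f : Fin (n + 1) → V} {g : Fin (n + 1) → W}
    (hf : ∀ k, LinearIndependent K (f ∘ Fin.succAbove k))
    (hg : ∀ k, LinearIndependent K (g ∘ Fin.succAbove k)) :
    ∃ M : V ≃ₗ[K] W, ∀ i, ∃ u : K, u ≠ 0 ∧ M (f i) = u • g i := by
  obtain ⟨b, c, hc, hfb, hf_last⟩ := exists_basis_of_linearIndependent_succAbove hV hf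
  obtain ⟨b', c', hc', hgb', hg_last⟩ := exists_basis_of_linearIndependent_succAbove hW hg
  refine ⟨b.equiv b' (Equiv.refl _), Fin.lastCases ⟨1, one_ne_zero, ?_⟩ fun j => ?_⟩
  · simp [hf_last, hg_last]
  · refine ⟨c j / c' j, div_ne_zero (hc j) (hc' j), ?_⟩
    rw [hfb, hgb', map_smul, Basis.equiv_apply, Equiv.refl_apply, smul_smul,
      div_mul_cancel₀ _ (hc' j)]

end GeneralPosition

theorem pair_add_smul_sub_smul_eq_of_ne_zero {V : Type*} [AddCommGroup V] [Module (ZMod 3) V]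
    (a v : V) {u : ZMod 3} (hu : u ≠ 0) :
    ({a + u • v, a - u • v} : Set V) = {a + v, a - v} := by
  obtain rfl | rfl : u = 1 ∨ u = -1 := by revert u; decide
  · simp
  · rw [neg_smul, one_smul, sub_neg_eq_add, ← sub_eq_add_neg, Set.pair_comm]

theorem finrank_V4 : finrank (ZMod 3) V4 = 4 := by simp

theorem IsDemicap.exists_directions {a : V4} {D : Set V4} (h : IsDemicap a D) :
    ∃ f : Fin 5 → V4, (∀ k, LinearIndependent (ZMod 3) (f ∘ Fin.succAbove k)) ∧
      D = ⋃ i, {a + f i, a - f i} := by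
  obtain ⟨-, -, d, d', hline, rfl, hflat⟩ := h
  refine ⟨fun i => d i - a, fun k => ?_, ?_⟩
  · refine linearIndependent_of_forall_hyperplane_exists_notMem (by simp) fun H hH => ?_
    by_contra! hsub
    refine hflat ⟨Finset.univ.erase k, by simp, H, by rw [finrank_V4] at hH; omega, fun i hi => ?_⟩
    obtain ⟨j, rfl⟩ := Fin.exists_succAbove_eq (Finset.ne_of_mem_erase hi)
    exact hsub j
  · have hd' : ∀ i, a - (d i - a) = d' i := fun i => by
      funext k
      have h3 : ∀ x y z : ZMod 3, x + y + z = 0 → x - (y - x) = z := by decide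
      exact h3 _ _ _ (congrFun (hline i) k)
    simp only [add_sub_cancel, hd', Set.insert_eq, Set.iUnion_union_distrib,
      Set.iUnion_singleton_eq_range]

/-- Any two demicaps are equivalent under an invertible affine transformation. -/
theorem demicaps_affinely_equivalent (a₁ a₂ : V4) (D₁ D₂ : Set V4)
    (h₁ : IsDemicap a₁ D₁) (h₂ : IsDemicap a₂ D₂) :
    ∃ (A : V4 ≃ₗ[ZMod 3] V4) (b : V4), (fun x => A x + b) '' D₁ = D₂ := by
  obtain ⟨f₁, hf₁, rfl⟩ := h₁.exists_directions
  obtain ⟨f₂, hf₂, rfl⟩ := h₂.exists_directions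
  obtain ⟨M, hM⟩ :=
    exists_linearEquiv_apply_eq_smul_of_linearIndependent_succAbove finrank_V4 finrank_V4 hf₁ hf₂
  refine ⟨M, a₂ - M a₁, ?_⟩
  simp only [Set.image_iUnion, Set.image_pair]
  refine Set.iUnion_congr fun i => ?_
  obtain ⟨u, hu, hMf⟩ := hM i
  rw [map_add, map_sub, hMf, ← pair_add_smul_sub_smul_eq_of_ne_zero a₂ (f₂ i) hu]
  exact congrArg₂ (fun x y => ({x, y} : Set V4)) (by abel) (by abel)
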